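/- arXiv:2604.25108 — 3 statements merged into one kernel-verified Lean document; each statement's English description precedes it below -/
import Mathlib

section
/- For a nonnegative random variable X with E[X^r] < ∞, and with survival function expanded by inclusion-exclusion over the coupon types, the r-th rising moment of the discrete completion time T satisfies the exact finite rational formula: E[T^{(r)}] = r ∑_{∅≠A⊆[N]} (-1)^{|A|+1} ∑_{α∈{0,...,m-1}^A} (p^α/α!) · (|α|+r-1)!/p_A^{|α|+r}, where p_A = ∑_{i∈A} p_i, p^α = ∏_{i∈A} p_i^{α_i}, α! = ∏_{i∈A} α_i!, |α| = ∑_{i∈A} α_i. -/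
open MeasureTheory ProbabilityTheory

/-- `Qm m x = e^{-x} ∑_{a<m} x^a/a!`, the Gamma(m,1) survival function. -/
noncomputable def Qm (m : ℕ) (x : ℝ) : ℝ :=
  Real.exp (-x) * ∑ a ∈ Finset.range m, x ^ a / (Nat.factorial a)

/-!
By the layer-cake formula, `E[X^r] = ∫₀^∞ r t^(r-1) P(X > t) dt`. Expanding
`1 - ∏ (1 - Q_m(p_j t))` by inclusion–exclusion and each `∏_{j∈A} Q_m(p_j t)` into the finite sum
`∑_α (p^α/α!) t^|α| e^{-p_A t}` turns the integrand into finitely many Gamma integrands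
`t^n e^{-c t}`, each integrating to `n!/c^(n+1)`.
-/

open Set Finset Real
open scoped Nat

lemma integrableOn_pow_mul_exp_neg_mul_Ioi (n : ℕ) {c : ℝ} (hc : 0 < c) :
    IntegrableOn (fun t : ℝ => t ^ n * exp (-(c * t))) (Ioi 0) := by
  simpa [Real.rpow_natCast, neg_mul] using
    integrableOn_rpow_mul_exp_neg_mul_rpow (s := n) (p := 1)
      (by linarith [n.cast_nonneg (α := ℝ)]) zero_lt_one hc

lemma integral_pow_mul_exp_neg_mul_Ioi (n : ℕ) {c : ℝ} (hc : 0 < c) :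
    ∫ t in Ioi (0 : ℝ), t ^ n * exp (-(c * t)) = n ! / c ^ (n + 1) := by
  have h := integral_rpow_mul_exp_neg_mul_Ioi (a := n + 1) (by positivity) hc
  simp only [add_sub_cancel_right, Real.rpow_natCast] at h
  rw [h, Gamma_nat_eq_factorial, ← Nat.cast_succ, Real.rpow_natCast, one_div, inv_pow,
    inv_mul_eq_div]

lemma integral_pow_eq_integral_meas_lt_mul {α : Type*} [MeasurableSpace α] {μ : Measure α}
    {f : α → ℝ} {r : ℕ} (hr : r ≠ 0) (hf_nn : 0 ≤ᵐ[μ] f) (hf_meas : AEMeasurable f μ)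
    (hf_int : Integrable (fun a => f a ^ r) μ) :
    ∫ a, f a ^ r ∂μ = ∫ t in Ioi 0, μ.real {a | t < f a} * (r * t ^ (r - 1)) := by
  set g : ℝ → ℝ := fun t => r * t ^ (r - 1)
  have hg_primitive (x : ℝ) : ∫ t in (0 : ℝ)..x, g t = x ^ r := by
    have hr' : ((r - 1 : ℕ) : ℝ) + 1 = r := by
      rw [Nat.cast_pred (Nat.pos_of_ne_zero hr), sub_add_cancel]
    simp only [g, intervalIntegral.integral_const_mul, integral_pow,
      Nat.sub_add_cancel (Nat.one_le_iff_ne_zero.2 hr), hr', zero_pow hr, sub_zero]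
    field_simp
  have hg_nn : ∀ t ∈ Ioi (0 : ℝ), 0 ≤ g t := fun t ht => by
    have : (0 : ℝ) ≤ t := le_of_lt ht; positivity
  have h_layer := lintegral_comp_eq_lintegral_meas_lt_mul μ hf_nn hf_meas
    (fun t _ => (by fun_prop : Continuous g).intervalIntegrable 0 t)
    (ae_restrict_of_forall_mem measurableSet_Ioi hg_nn)
  simp only [hg_primitive] at h_layer
  -- Markov's inequality for `f ^ r`.
  have h_tail_finite (t : ℝ) (ht : 0 < t) : μ {a | t < f a} ≠ ⊤ :=
    ((measure_mono fun a (ha : t < f a) => (pow_lt_pow_left₀ ha ht.le hr :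
      t ^ r < f a ^ r)).trans_lt (hf_int.measure_gt_lt_top (pow_pos ht r))).ne
  have h_tail_meas : Measurable fun t => μ.real {a | t < f a} :=
    (Antitone.measurable fun s t hst => measure_mono fun a (ha : t < f a) =>
      hst.trans_lt ha).ennreal_toReal
  rw [integral_eq_lintegral_of_nonneg_ae (hf_nn.mono fun a ha => pow_nonneg ha r)
      hf_int.aestronglyMeasurable, h_layer,
    integral_eq_lintegral_of_nonneg_ae (ae_restrict_of_forall_mem measurableSet_Ioi
      fun t ht => mul_nonneg measureReal_nonneg (hg_nn t ht))
      (h_tail_meas.mul (by fun_prop : Continuous g).measurable).aestronglyMeasurable]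
  congr 1
  refine setLIntegral_congr_fun measurableSet_Ioi fun t ht => ?_
  rw [ENNReal.ofReal_mul measureReal_nonneg, measureReal_def,
    ENNReal.ofReal_toReal (h_tail_finite t ht)]

lemma one_sub_prod_one_sub {ι R : Type*} [CommRing R] [DecidableEq ι] (s : Finset ι)
    (f : ι → R) :
    1 - ∏ i ∈ s, (1 - f i) = ∑ t ∈ s.powerset with t.Nonempty, (-1) ^ (#t + 1) * ∏ i ∈ t, f i := by
  rw [prod_sub, ← sum_filter_not_add_sum_filter _ (fun t : Finset ι => t.Nonempty)]
  simp only [Finset.not_nonempty_iff_eq_empty, filter_eq', empty_mem_powerset, if_true,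
    sum_singleton]
  simp [pow_succ]

section MultiIndex

variable {ι : Type*}

-- A multi-index `α ∈ ℕ^A` is a dependent function `∀ i ∈ A, ℕ`, as in `Finset.pi`.

def multiIndexDegree (A : Finset ι) (α : ∀ i ∈ A, ℕ) : ℕ :=
  ∑ i ∈ A.attach, α i.1 i.2

noncomputable def monomialDivFactorial (p : ι → ℝ) (A : Finset ι) (α : ∀ i ∈ A, ℕ) : ℝ :=
  (∏ i ∈ A.attach, p i.1 ^ α i.1 i.2) / ∏ i ∈ A.attach, ((α i.1 i.2)! : ℝ)

variable [DecidableEq ι] (m k : ℕ) {p : ι → ℝ} {A : Finset ι}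

lemma prod_Qm_mul_pow_eq_sum (t : ℝ) :
    (∏ j ∈ A, Qm m (p j * t)) * t ^ k
      = ∑ α ∈ A.pi fun _ => range m, monomialDivFactorial p A α *
          (t ^ (multiIndexDegree A α + k) * exp (-((∑ j ∈ A, p j) * t))) := by
  have h_exp : ∏ j ∈ A, exp (-(p j * t)) = exp (-((∑ j ∈ A, p j) * t)) := by
    rw [← exp_sum, sum_neg_distrib, sum_mul]
  simp only [Qm, prod_mul_distrib]
  rw [h_exp, prod_sum, mul_sum, sum_mul]
  refine sum_congr rfl fun α _ => ?_
  simp only [monomialDivFactorial, multiIndexDegree, prod_div_distrib, mul_pow, prod_mul_distrib,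
    prod_pow_eq_pow_sum, pow_add]
  ring

lemma integrableOn_prod_Qm_mul_pow (hA : 0 < ∑ j ∈ A, p j) :
    IntegrableOn (fun t => (∏ j ∈ A, Qm m (p j * t)) * t ^ k) (Ioi 0) := by
  simp only [prod_Qm_mul_pow_eq_sum]
  exact integrable_finsetSum _ fun α _ =>
    (integrableOn_pow_mul_exp_neg_mul_Ioi _ hA).const_mul _

lemma integral_prod_Qm_mul_pow (hA : 0 < ∑ j ∈ A, p j) :
    ∫ t in Ioi 0, (∏ j ∈ A, Qm m (p j * t)) * t ^ k
      = ∑ α ∈ A.pi fun _ => range m, monomialDivFactorial p A α *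
          ((multiIndexDegree A α + k)! / (∑ j ∈ A, p j) ^ (multiIndexDegree A α + k + 1)) := by
  simp only [prod_Qm_mul_pow_eq_sum]
  rw [integral_finsetSum _ fun α _ => (integrableOn_pow_mul_exp_neg_mul_Ioi _ hA).const_mul _]
  simp only [integral_const_mul, integral_pow_mul_exp_neg_mul_Ioi _ hA]

end MultiIndex

theorem finite_rational_moment_formula_general
    {Ω : Type*} [MeasureSpace Ω]
    (N m r : ℕ) (hr : 1 ≤ r)
    (p : Fin N → ℝ) (hp : ∀ j, 0 < p j)
    (T : Ω → ℕ)
    (X : Ω → ℝ) (hXmeas : Measurable X) (hXpos : ∀ ω, 0 ≤ X ω)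
    (hXint : Integrable (fun ω => (X ω) ^ r) ℙ)
    (hSurv : ∀ t : ℝ, 0 ≤ t →
      (ℙ {ω | t < X ω}).toReal = 1 - ∏ j, (1 - Qm m (p j * t)))
    (hTransfer : ∫ ω, (X ω) ^ r ∂ℙ
        = ∫ ω, ∏ i ∈ Finset.range r, ((T ω : ℝ) + i) ∂ℙ) :
    ∫ ω, ∏ i ∈ Finset.range r, ((T ω : ℝ) + i) ∂ℙ
      = r * ∑ A ∈ Finset.univ.powerset.filter (fun A : Finset (Fin N) => A.Nonempty),
          (-1 : ℝ) ^ (A.card + 1) *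
          ∑ α ∈ A.pi (fun _ => Finset.range m),
            ((∏ i ∈ A.attach, (p i.1) ^ (α i.1 i.2)) /
              (∏ i ∈ A.attach, (Nat.factorial (α i.1 i.2) : ℝ))) *
            ((Nat.factorial ((∑ i ∈ A.attach, α i.1 i.2) + r - 1) : ℝ) /
              (∑ i ∈ A, p i) ^ ((∑ i ∈ A.attach, α i.1 i.2) + r)) := by
  obtain ⟨k, rfl⟩ := Nat.exists_eq_add_one.2 hr
  set S := Finset.univ.powerset.filter fun A : Finset (Fin N) => A.Nonempty
  have hpA : ∀ A ∈ S, 0 < ∑ j ∈ A, p j := fun A hA =>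
    sum_pos (fun j _ => hp j) (mem_filter.1 hA).2
  rw [← hTransfer, integral_pow_eq_integral_meas_lt_mul k.succ_ne_zero (ae_of_all _ hXpos)
    hXmeas.aemeasurable hXint]
  calc _ = ∫ t in Ioi 0, ∑ A ∈ S, ((-1) ^ (#A + 1) * (k + 1 : ℕ)) *
              ((∏ j ∈ A, Qm m (p j * t)) * t ^ k) := by
        refine setIntegral_congr_fun measurableSet_Ioi fun t ht => ?_
        rw [measureReal_def, hSurv t (le_of_lt ht), one_sub_prod_one_sub, sum_mul,
          Nat.succ_sub_one]
        exact sum_congr rfl fun A _ => by ring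
    _ = ∑ A ∈ S, ((-1) ^ (#A + 1) * (k + 1 : ℕ)) *
          ∫ t in Ioi 0, (∏ j ∈ A, Qm m (p j * t)) * t ^ k := by
        rw [integral_finsetSum _ fun A hA =>
          (integrableOn_prod_Qm_mul_pow m k (hpA A hA)).const_mul _]
        simp only [integral_const_mul]
    _ = _ := by
        rw [mul_sum]
        refine sum_congr rfl fun A hA => ?_
        simp only [integral_prod_Qm_mul_pow m k (hpA A hA), multiIndexDegree,
          monomialDivFactorial, ← add_assoc, add_tsub_cancel_right]
        ring

/-- finite rational formula for the rising moments of the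
double Dixie cup completion time `T`. Here `X` is the Poissonized completion
time, with survival function `1 - ∏_j (1 - Qm m (p j t))`, and
`E[X^r] = E[T^{(r)}]`. -/
theorem finite_rational_moment_formula
    {Ω : Type*} [MeasureSpace Ω] [IsProbabilityMeasure (ℙ : Measure Ω)]
    (N m r : ℕ) (hN : 1 ≤ N) (hm : 1 ≤ m) (hr : 1 ≤ r)
    (p : Fin N → ℝ) (hp : ∀ j, 0 < p j) (hsum : ∑ j, p j = 1)
    (T : Ω → ℕ) (hTmeas : Measurable T) (hT1 : ∀ ω, 1 ≤ T ω)
    (hTint : Integrable (fun ω => ∏ i ∈ Finset.range r, ((T ω : ℝ) + i)) ℙ)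
    (X : Ω → ℝ) (hXmeas : Measurable X) (hXpos : ∀ ω, 0 ≤ X ω)
    (hXint : Integrable (fun ω => (X ω) ^ r) ℙ)
    (hSurv : ∀ t : ℝ, 0 ≤ t →
      (ℙ {ω | t < X ω}).toReal = 1 - ∏ j, (1 - Qm m (p j * t)))
    (hTransfer : ∫ ω, (X ω) ^ r ∂ℙ
        = ∫ ω, ∏ i ∈ Finset.range r, ((T ω : ℝ) + i) ∂ℙ) :
    ∫ ω, ∏ i ∈ Finset.range r, ((T ω : ℝ) + i) ∂ℙ
      = r * ∑ A ∈ Finset.univ.powerset.filter (fun A : Finset (Fin N) => A.Nonempty),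
          (-1 : ℝ) ^ (A.card + 1) *
          ∑ α ∈ A.pi (fun _ => Finset.range m),
            ((∏ i ∈ A.attach, (p i.1) ^ (α i.1 i.2)) /
              (∏ i ∈ A.attach, (Nat.factorial (α i.1 i.2) : ℝ))) *
            ((Nat.factorial ((∑ i ∈ A.attach, α i.1 i.2) + r - 1) : ℝ) /
              (∑ i ∈ A, p i) ^ ((∑ i ∈ A.attach, α i.1 i.2) + r)) :=
  finite_rational_moment_formula_general N m r hr p hp T X hXmeas hXpos hXint hSurv hTransfer
end

section
/- Let F_m(y) = 1 − e^{-y}∑_{k=0}^{m-1} y^k/k! be the Gamma(m,1) CDF and φ(y) = F_m'(y)/F_m(y) its reverse hazard. Then φ is strictly decreasing on (0,∞), and for every constant c > 1 the ratio y ↦ φ(cy)/φ(y) is strictly decreasing on (0,∞). -/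
/-!
Write `Fm m y = e^{-y} y^m Q(y)` with `Q(y) = ∑ₖ y^k/(k+m)!`, a power series with positive
coefficients. Since `Fm' y = e^{-y} y^{m-1}/(m-1)!`, the reverse hazard is
`φ(y) = 1/((m-1)! y Q(y))`, strictly decreasing because `y Q(y)` is strictly increasing, and
`φ(cy)/φ(y) = Q(y)/(c Q(cy))`. For any power series `∑ a_k y^k` with nonnegative coefficients,
two of them positive, `Q(y)/Q(cy)` strictly decreases on `y > 0` when `c > 1`: expanding
`Q(y₁)Q(cy₂) - Q(y₂)Q(cy₁)` as a double series, the terms at `(i, j)` and `(j, i)` add up to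
`a_i a_j (c^j - c^i)(y₁^i y₂^j - y₂^i y₁^j) ≥ 0`, with strict inequality for `i ≠ j`.
-/

open Real Set

/-- `Fm m y = 1 - e^{-y} ∑_{k<m} y^k/k!`, the Gamma(m,1) CDF. -/
noncomputable def Fm (m : ℕ) (y : ℝ) : ℝ :=
  1 - Real.exp (-y) * ∑ k ∈ Finset.range m, y ^ k / (Nat.factorial k)

/-- The reverse hazard `φ = Fm' / Fm`. -/
noncomputable def revHazard (m : ℕ) (y : ℝ) : ℝ :=
  deriv (Fm m) y / Fm m y

open scoped Nat

section NonnegCoeffPowerSeries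

variable {a : ℕ → ℝ}

lemma tsum_pos_of_add_swap_pos {α : Type*} {D : α × α → ℝ} (hD : Summable D)
    (hnn : ∀ p, 0 ≤ D p + D p.swap) (p₀ : α × α) (hp₀ : 0 < D p₀ + D p₀.swap) :
    0 < ∑' p, D p := by
  have hswap : Summable fun p : α × α => D p.swap := (Equiv.prodComm α α).summable_iff.2 hD
  have hsym : ∑' p, (D p + D p.swap) = 2 * ∑' p, D p := by
    have hswap_eq : ∑' p : α × α, D p.swap = ∑' p, D p := (Equiv.prodComm α α).tsum_eq D
    rw [hD.tsum_add hswap, hswap_eq]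
    ring
  have := (hD.add hswap).tsum_pos hnn p₀ hp₀
  linarith

lemma pow_sub_pow_mul_cross_pos {c x y : ℝ} (hc : 1 < c) (hx : 0 < x) (hxy : x < y)
    {i j : ℕ} (hij : i < j) : 0 < (c ^ j - c ^ i) * (x ^ i * y ^ j - y ^ i * x ^ j) := by
  obtain ⟨d, rfl⟩ := Nat.exists_eq_add_of_lt hij
  have hc' : c ^ i < c ^ (i + d + 1) := pow_lt_pow_right₀ hc (by omega)
  have hxy' : x ^ (d + 1) < y ^ (d + 1) := pow_lt_pow_left₀ hxy hx.le (by omega)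
  have hy : 0 < y := hx.trans hxy
  have hfactor : x ^ i * y ^ (i + d + 1) - y ^ i * x ^ (i + d + 1)
      = x ^ i * y ^ i * (y ^ (d + 1) - x ^ (d + 1)) := by ring
  rw [hfactor]
  exact mul_pos (by linarith) (mul_pos (by positivity) (by linarith))

lemma pow_sub_pow_mul_cross_nonneg {c x y : ℝ} (hc : 1 < c) (hx : 0 < x) (hxy : x < y)
    (i j : ℕ) : 0 ≤ (c ^ j - c ^ i) * (x ^ i * y ^ j - y ^ i * x ^ j) := by
  rcases lt_trichotomy i j with h | rfl | h
  · exact (pow_sub_pow_mul_cross_pos hc hx hxy h).le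
  · simp
  · have hsymm : (c ^ j - c ^ i) * (x ^ i * y ^ j - y ^ i * x ^ j)
        = (c ^ i - c ^ j) * (x ^ j * y ^ i - y ^ j * x ^ i) := by ring
    exact hsymm ▸ (pow_sub_pow_mul_cross_pos hc hx hxy h).le

lemma tsum_mul_pow_pos (ha : ∀ k, 0 ≤ a k) (hs : ∀ y, Summable fun k => a k * y ^ k)
    {i : ℕ} (hi : 0 < a i) {y : ℝ} (hy : 0 < y) : 0 < ∑' k, a k * y ^ k :=
  (hs y).tsum_pos (fun k => mul_nonneg (ha k) (pow_nonneg hy.le k)) i (mul_pos hi (pow_pos hy i))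

lemma monotoneOn_tsum_mul_pow (ha : ∀ k, 0 ≤ a k) (hs : ∀ y, Summable fun k => a k * y ^ k) :
    MonotoneOn (fun y => ∑' k, a k * y ^ k) (Ici 0) := fun _ hx _ _ hxy =>
  (hs _).tsum_le_tsum (fun k => mul_le_mul_of_nonneg_left (pow_le_pow_left₀ hx hxy k) (ha k)) (hs _)

lemma strictMonoOn_mul_tsum_mul_pow (ha : ∀ k, 0 ≤ a k)
    (hs : ∀ y, Summable fun k => a k * y ^ k) {i : ℕ} (hi : 0 < a i) :
    StrictMonoOn (fun y => y * ∑' k, a k * y ^ k) (Ioi 0) := fun _ hx _ hy hxy =>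
  mul_lt_mul hxy (monotoneOn_tsum_mul_pow ha hs (Ioi_subset_Ici_self hx) (Ioi_subset_Ici_self hy)
    hxy.le) (tsum_mul_pow_pos ha hs hi hx) (Ioi_subset_Ici_self hy)

lemma tsum_mul_pow_mul_lt (ha : ∀ k, 0 ≤ a k) (hs : ∀ y, Summable fun k => a k * y ^ k)
    {i j : ℕ} (hij : i < j) (hi : 0 < a i) (hj : 0 < a j) {c y₁ y₂ : ℝ} (hc : 1 < c)
    (hy₁ : 0 < y₁) (hy₁₂ : y₁ < y₂) :
    (∑' k, a k * y₂ ^ k) * ∑' k, a k * (c * y₁) ^ k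
      < (∑' k, a k * y₁ ^ k) * ∑' k, a k * (c * y₂) ^ k := by
  have hprod : ∀ u v : ℝ, 0 ≤ u → 0 ≤ v →
      Summable (fun p : ℕ × ℕ => a p.1 * u ^ p.1 * (a p.2 * v ^ p.2)) ∧
      (∑' k, a k * u ^ k) * ∑' k, a k * v ^ k
        = ∑' p : ℕ × ℕ, a p.1 * u ^ p.1 * (a p.2 * v ^ p.2) := by
    intro u v hu hv
    have hsum := (hs u).mul_of_nonneg (hs v) (fun k => mul_nonneg (ha k) (pow_nonneg hu k))
      (fun k => mul_nonneg (ha k) (pow_nonneg hv k))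
    exact ⟨hsum, (hs u).tsum_mul_tsum (hs v) hsum⟩
  have hc₀ : 0 < c := one_pos.trans hc
  have hy₂ : 0 < y₂ := hy₁.trans hy₁₂
  obtain ⟨hF, hF_eq⟩ := hprod y₂ (c * y₁) hy₂.le (by positivity)
  obtain ⟨hG, hG_eq⟩ := hprod y₁ (c * y₂) hy₁.le (by positivity)
  rw [hF_eq, hG_eq, ← sub_pos, ← hG.tsum_sub hF]
  have hpair : ∀ k l : ℕ,
      (a k * y₁ ^ k * (a l * (c * y₂) ^ l) - a k * y₂ ^ k * (a l * (c * y₁) ^ l))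
      + (a l * y₁ ^ l * (a k * (c * y₂) ^ k) - a l * y₂ ^ l * (a k * (c * y₁) ^ k))
      = a k * a l * ((c ^ l - c ^ k) * (y₁ ^ k * y₂ ^ l - y₂ ^ k * y₁ ^ l)) := by
    intro k l
    ring
  refine tsum_pos_of_add_swap_pos (hG.sub hF) (fun ⟨k, l⟩ => ?_) (i, j) ?_
  · rw [Prod.swap_prod_mk, hpair]
    exact mul_nonneg (mul_nonneg (ha k) (ha l)) (pow_sub_pow_mul_cross_nonneg hc hy₁ hy₁₂ k l)
  · rw [Prod.swap_prod_mk, hpair]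
    exact mul_pos (mul_pos hi hj) (pow_sub_pow_mul_cross_pos hc hy₁ hy₁₂ hij)

lemma strictAntiOn_tsum_mul_pow_div_comp_mul (ha : ∀ k, 0 ≤ a k)
    (hs : ∀ y, Summable fun k => a k * y ^ k) {i j : ℕ} (hij : i < j) (hi : 0 < a i)
    (hj : 0 < a j) {c : ℝ} (hc : 1 < c) :
    StrictAntiOn (fun y => (∑' k, a k * y ^ k) / ∑' k, a k * (c * y) ^ k) (Ioi 0) := by
  intro y₁ hy₁ y₂ hy₂ hy₁₂
  have hc₀ : 0 < c := one_pos.trans hc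
  rw [div_lt_div_iff₀ (tsum_mul_pow_pos ha hs hi (mul_pos hc₀ hy₂))
    (tsum_mul_pow_pos ha hs hi (mul_pos hc₀ hy₁))]
  exact tsum_mul_pow_mul_lt ha hs hij hi hj hc hy₁ hy₁₂

end NonnegCoeffPowerSeries

noncomputable def expTailSeries (m : ℕ) (y : ℝ) : ℝ := ∑' k : ℕ, ((k + m)! : ℝ)⁻¹ * y ^ k

lemma summable_expTailSeries (m : ℕ) (y : ℝ) :
    Summable fun k : ℕ => ((k + m)! : ℝ)⁻¹ * y ^ k :=
  (Real.summable_pow_div_factorial |y|).of_norm_bounded fun k => by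
    rw [norm_mul, norm_inv, Real.norm_natCast, norm_pow, Real.norm_eq_abs, inv_mul_eq_div]
    exact div_le_div_of_nonneg_left (by positivity) (by positivity)
      (by exact_mod_cast Nat.factorial_le (Nat.le_add_right k m))

lemma expTailSeries_pos (m : ℕ) {y : ℝ} (hy : 0 < y) : 0 < expTailSeries m y :=
  tsum_mul_pow_pos (fun k => by positivity) (summable_expTailSeries m) (i := 0) (by positivity) hy

lemma exp_eq_sum_add_pow_mul_expTailSeries (m : ℕ) (y : ℝ) :
    exp y = ∑ k ∈ Finset.range m, y ^ k / k ! + y ^ m * expTailSeries m y := by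
  rw [exp_eq_exp_ℝ, NormedSpace.exp_eq_tsum_div]
  dsimp only
  rw [← (Real.summable_pow_div_factorial y).sum_add_tsum_nat_add m, expTailSeries, ← tsum_mul_left]
  congr 1
  refine tsum_congr fun k => ?_
  rw [pow_add]
  ring

lemma Fm_eq_exp_mul_pow_mul_expTailSeries (m : ℕ) (y : ℝ) :
    Fm m y = exp (-y) * (y ^ m * expTailSeries m y) := by
  have hexp : exp (-y) * exp y = 1 := by rw [← exp_add, neg_add_cancel, exp_zero]
  rw [Fm]
  linear_combination exp (-y) * exp_eq_sum_add_pow_mul_expTailSeries m y - hexp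

lemma hasDerivAt_sum_range_pow_div_factorial (n : ℕ) (y : ℝ) :
    HasDerivAt (fun y : ℝ => ∑ k ∈ Finset.range (n + 1), y ^ k / k !)
      (∑ k ∈ Finset.range n, y ^ k / k !) y := by
  induction n with
  | zero => simpa using hasDerivAt_const y (1 : ℝ)
  | succ n ih =>
    simp_rw [Finset.sum_range_succ _ (n + 1)]
    refine (ih.add ((hasDerivAt_pow (n + 1) y).div_const ((n + 1)! : ℝ))).congr_deriv ?_
    rw [Finset.sum_range_succ, Nat.factorial_succ]
    push_cast
    field_simp

lemma hasDerivAt_Fm_succ (n : ℕ) (y : ℝ) :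
    HasDerivAt (Fm (n + 1)) (exp (-y) * (y ^ n / n !)) y := by
  have hexp : HasDerivAt (fun y => exp (-y)) (-exp (-y)) y := by
    simpa using (hasDerivAt_neg y).exp
  refine ((hexp.mul (hasDerivAt_sum_range_pow_div_factorial n y)).const_sub 1).congr_deriv ?_
  rw [Finset.sum_range_succ]
  ring

lemma revHazard_succ_eq (n : ℕ) {y : ℝ} (hy : y ≠ 0) :
    revHazard (n + 1) y = (n ! * (y * expTailSeries (n + 1) y))⁻¹ := by
  rw [revHazard, (hasDerivAt_Fm_succ n y).deriv, Fm_eq_exp_mul_pow_mul_expTailSeries, pow_succ]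
  field_simp

lemma revHazard_succ_mul_div (n : ℕ) {c y : ℝ} (hc : c ≠ 0) (hy : y ≠ 0) :
    revHazard (n + 1) (c * y) / revHazard (n + 1) y
      = c⁻¹ * (expTailSeries (n + 1) y / expTailSeries (n + 1) (c * y)) := by
  rw [revHazard_succ_eq n (mul_ne_zero hc hy), revHazard_succ_eq n hy]
  field_simp

/-- the Gamma(m,1) reverse hazard `φ` is strictly decreasing on
`(0,∞)`, and for every `c > 1` the ratio `y ↦ φ(cy)/φ(y)` is strictly
decreasing on `(0,∞)`. -/
theorem reverse_hazard_ratio_strictAnti (m : ℕ) (hm : 1 ≤ m) :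
    StrictAntiOn (revHazard m) (Set.Ioi (0:ℝ)) ∧
    ∀ c : ℝ, 1 < c →
      StrictAntiOn (fun y => revHazard m (c * y) / revHazard m y)
        (Set.Ioi (0:ℝ)) := by
  obtain ⟨n, rfl⟩ := Nat.exists_eq_add_of_le' hm
  have ha : ∀ k : ℕ, 0 < ((k + (n + 1))! : ℝ)⁻¹ := fun k => by positivity
  have hs := summable_expTailSeries (n + 1)
  have hfact : (0 : ℝ) < n ! := by positivity
  constructor
  · intro y₁ hy₁ y₂ hy₂ hy₁₂
    rw [revHazard_succ_eq n hy₁.ne', revHazard_succ_eq n hy₂.ne']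
    have hmono := strictMonoOn_mul_tsum_mul_pow (fun k => (ha k).le) hs (ha 0) hy₁ hy₂ hy₁₂
    exact inv_strictAnti₀ (mul_pos hfact (mul_pos hy₁ (expTailSeries_pos _ hy₁)))
      (mul_lt_mul_of_pos_left hmono hfact)
  · intro c hc y₁ hy₁ y₂ hy₂ hy₁₂
    have hc₀ : 0 < c := one_pos.trans hc
    dsimp only
    rw [revHazard_succ_mul_div n hc₀.ne' hy₁.ne', revHazard_succ_mul_div n hc₀.ne' hy₂.ne']
    exact mul_lt_mul_of_pos_left (strictAntiOn_tsum_mul_pow_div_comp_mul (fun k => (ha k).le)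
      hs zero_lt_one (ha 0) (ha 1) hc hy₁ hy₂ hy₁₂) (inv_pos.2 hc₀)
end

section
/- Fix an integer m ≥ 1 and define b_m(y) = y^m/((m-1)! D_m(y)) + y − (m−1), where D_m(y) = ∑_{n≥m} y^n/n!. Then b_m is strictly increasing on (0,∞), b_m(y) → 1 as y → 0+, and b_m(y) > 1 for all y > 0. -/
/-!
With `m = k + 1` and `D = Dm (k + 1)` one has `D' = Dm k = D + y ^ k / k!`, so the derivative
of `bm (k + 1)` is `(k! D² - (y ^ (k + 1) Dm k - (k + 1) y ^ k D)) / (k! D²)`. Both parts of the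
numerator are power series in `y`: the subtracted one is
`∑ (n + 1) y ^ (n + 2k + 2) / (n + k + 2)!`, and by the Cauchy product the coefficient of
`y ^ (n + 2k + 2)` in `k! D²` is `k! ∑_{i + j = n} 1 / ((i + k + 1)! (j + k + 1)!)`. Each of
these `n + 1` summands exceeds `1 / (n + k + 2)!`, because
`(i + k + 1)! (j + k + 1)! < k! (i + j + k + 2)!`. So `bm` is strictly increasing;
`Dm m y ~ y ^ m / m!` as `y → 0` gives the limit `1`, and monotonicity gives `bm > 1`.
-/

open Real Set Filter

/-- `Dm m y = e^y - ∑_{k<m} y^k/k! = ∑_{n≥m} y^n/n!`. -/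
noncomputable def Dm (m : ℕ) (y : ℝ) : ℝ :=
  Real.exp y - ∑ k ∈ Finset.range m, y ^ k / (Nat.factorial k)

/-- `bm m y = y^m/((m-1)! Dm m y) + y - (m-1)`. -/
noncomputable def bm (m : ℕ) (y : ℝ) : ℝ :=
  y ^ m / ((Nat.factorial (m - 1)) * Dm m y) + y - ((m : ℝ) - 1)

open Finset
open scoped Nat Topology

theorem Nat.factorial_mul_factorial_lt (i j k : ℕ) :
    (i + k + 1)! * (j + k + 1)! < k ! * (i + j + k + 2)! := by
  have hi : k ! * (k + 1).ascFactorial (i + 1) = (i + k + 1)! := by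
    rw [Nat.factorial_mul_ascFactorial]; ring_nf
  have hij : (j + k + 1)! * (j + k + 1 + 1).ascFactorial (i + 1) = (i + j + k + 2)! := by
    rw [Nat.factorial_mul_ascFactorial]; ring_nf
  have hasc : (k + 1).ascFactorial (i + 1) < (j + k + 1 + 1).ascFactorial (i + 1) := by
    rw [Nat.ascFactorial_succ, Nat.ascFactorial_succ]
    exact Nat.mul_lt_mul_of_lt_of_le (by omega) (Nat.ascFactorial_le _ (by omega))
      (Nat.ascFactorial_pos _ _)
  rw [← hi, ← hij]
  calc k ! * (k + 1).ascFactorial (i + 1) * (j + k + 1)!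
      = k ! * (j + k + 1)! * (k + 1).ascFactorial (i + 1) := by ring
    _ < k ! * (j + k + 1)! * (j + k + 1 + 1).ascFactorial (i + 1) :=
      Nat.mul_lt_mul_of_pos_left hasc (by positivity)
    _ = k ! * ((j + k + 1)! * (j + k + 1 + 1).ascFactorial (i + 1)) := by ring

theorem Real.hasSum_pow_div_factorial (y : ℝ) : HasSum (fun n ↦ y ^ n / n !) (exp y) := by
  rw [exp_eq_exp_ℝ]
  exact NormedSpace.expSeries_div_hasSum_exp y

theorem hasSum_Dm (m : ℕ) (y : ℝ) :
    HasSum (fun n ↦ y ^ (n + m) / (n + m)!) (Dm m y) :=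
  (hasSum_nat_add_iff' m).2 (hasSum_pow_div_factorial y)

theorem Dm_pos (m : ℕ) {y : ℝ} (hy : 0 < y) : 0 < Dm m y :=
  hasSum_lt (f := fun _ ↦ 0) (i := 0) (fun n ↦ by positivity) (by positivity) hasSum_zero
    (hasSum_Dm m y)

theorem Dm_eq_Dm_succ_add (m : ℕ) (y : ℝ) : Dm m y = Dm (m + 1) y + y ^ m / m ! := by
  rw [Dm, Dm, sum_range_succ]; ring

theorem hasDerivAt_Dm_succ (m : ℕ) (y : ℝ) : HasDerivAt (Dm (m + 1)) (Dm m y) y := by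
  induction m with
  | zero =>
    have hD : Dm 1 = fun y ↦ exp y - 1 := funext fun y ↦ by simp [Dm]
    rw [hD]
    simpa [Dm] using (hasDerivAt_exp y).sub_const 1
  | succ m ih =>
    have hD : Dm (m + 2) = fun y ↦ Dm (m + 1) y - y ^ (m + 1) / (m + 1)! :=
      funext fun y ↦ by rw [Dm_eq_Dm_succ_add (m + 1)]; ring
    rw [hD]
    refine (ih.sub ((hasDerivAt_pow (m + 1) y).div_const ((m + 1)! : ℝ))).congr_deriv ?_
    rw [Dm_eq_Dm_succ_add m y, Nat.factorial_succ]
    push_cast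
    field_simp
    ring

theorem hasSum_Dm_sq (m : ℕ) (y : ℝ) :
    HasSum (fun n ↦ ∑ p ∈ antidiagonal n,
      y ^ (p.1 + m) / (p.1 + m)! * (y ^ (p.2 + m) / (p.2 + m)!)) (Dm m y ^ 2) := by
  have hnorm : Summable fun n ↦ ‖y ^ (n + m) / (n + m)!‖ := by
    simpa [norm_div, abs_pow] using (hasSum_Dm m |y|).summable
  rw [sq, ← (hasSum_Dm m y).tsum_eq,
    tsum_mul_tsum_eq_tsum_sum_antidiagonal_of_summable_norm hnorm hnorm]
  exact (summable_norm_sum_mul_antidiagonal_of_summable_norm hnorm hnorm).of_norm.hasSum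

theorem hasSum_pow_mul_Dm_sub (k : ℕ) (y : ℝ) :
    HasSum (fun n ↦ (n + 1) * y ^ (n + 2 * k + 2) / (n + k + 2)!)
      (y ^ (k + 1) * Dm k y - (k + 1) * y ^ k * Dm (k + 1) y) := by
  have h := ((hasSum_Dm k y).mul_left (y ^ (k + 1))).sub
    ((hasSum_Dm (k + 1) y).mul_left ((k + 1) * y ^ k))
  rw [← hasSum_nat_add_iff' 1] at h
  have h0 : y ^ (k + 1) * (y ^ (0 + k) / (0 + k)!)
      - (k + 1) * y ^ k * (y ^ (0 + (k + 1)) / (0 + (k + 1))!) = 0 := by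
    rw [zero_add, zero_add, Nat.factorial_succ]
    push_cast
    field_simp
    ring
  rw [range_one, sum_singleton, h0, sub_zero] at h
  refine h.congr_fun fun n ↦ ?_
  have h1 : n + 1 + (k + 1) = n + k + 2 := by ring
  have h2 : n + 1 + k = n + k + 1 := by ring
  rw [h1, h2, show n + k + 2 = (n + k + 1) + 1 by ring, Nat.factorial_succ]
  push_cast
  field_simp
  ring

theorem pow_div_factorial_lt_mul (i j k : ℕ) {y : ℝ} (hy : 0 < y) :
    y ^ (i + j + 2 * k + 2) / (i + j + k + 2)! <
      k ! * (y ^ (i + (k + 1)) / (i + (k + 1))! * (y ^ (j + (k + 1)) / (j + (k + 1))!)) := by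
  have hfac : ((i + (k + 1))! * (j + (k + 1))! : ℝ) < k ! * (i + j + k + 2)! := by
    exact_mod_cast Nat.factorial_mul_factorial_lt i j k
  have hpow : y ^ (i + (k + 1)) * y ^ (j + (k + 1)) = y ^ (i + j + 2 * k + 2) := by
    rw [← pow_add]; ring_nf
  rw [div_mul_div_comm, hpow, ← mul_div_assoc, div_lt_div_iff₀ (by positivity) (by positivity)]
  nlinarith [mul_lt_mul_of_pos_left hfac (pow_pos hy (i + j + 2 * k + 2))]

theorem succ_mul_pow_div_factorial_lt_sum_antidiagonal (k n : ℕ) {y : ℝ} (hy : 0 < y) :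
    (n + 1) * y ^ (n + 2 * k + 2) / (n + k + 2)! <
      k ! * ∑ p ∈ antidiagonal n,
        y ^ (p.1 + (k + 1)) / (p.1 + (k + 1))! * (y ^ (p.2 + (k + 1)) / (p.2 + (k + 1))!) := by
  rw [mul_sum]
  calc (n + 1) * y ^ (n + 2 * k + 2) / (n + k + 2)!
      = ∑ p ∈ antidiagonal n, y ^ (n + 2 * k + 2) / (n + k + 2)! := by
        rw [sum_const, Finset.Nat.card_antidiagonal, nsmul_eq_mul, mul_div_assoc]
        push_cast
        ring
    _ < _ := by
      refine sum_lt_sum_of_nonempty ⟨(0, n), by simp⟩ fun p hp ↦ ?_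
      rw [HasAntidiagonal.mem_antidiagonal] at hp
      subst hp
      exact pow_div_factorial_lt_mul p.1 p.2 k hy

theorem pow_mul_Dm_sub_lt_factorial_mul_Dm_sq (k : ℕ) {y : ℝ} (hy : 0 < y) :
    y ^ (k + 1) * Dm k y - (k + 1) * y ^ k * Dm (k + 1) y < k ! * Dm (k + 1) y ^ 2 :=
  hasSum_lt (i := 0) (fun n ↦ (succ_mul_pow_div_factorial_lt_sum_antidiagonal k n hy).le)
    (succ_mul_pow_div_factorial_lt_sum_antidiagonal k 0 hy) (hasSum_pow_mul_Dm_sub k y)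
    ((hasSum_Dm_sq (k + 1) y).mul_left _)

theorem bm_succ (k : ℕ) (y : ℝ) :
    bm (k + 1) y = y ^ (k + 1) / (k ! * Dm (k + 1) y) + y - k := by
  simp [bm]

theorem hasDerivAt_bm_succ (k : ℕ) {y : ℝ} (hy : 0 < y) :
    HasDerivAt (bm (k + 1))
      ((k ! * Dm (k + 1) y ^ 2 - (y ^ (k + 1) * Dm k y - (k + 1) * y ^ k * Dm (k + 1) y)) /
        (k ! * Dm (k + 1) y ^ 2)) y := by
  have hD := Dm_pos (k + 1) hy
  have h := (((hasDerivAt_pow (k + 1) y).div ((hasDerivAt_Dm_succ k y).const_mul (k ! : ℝ))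
    (by positivity)).add (hasDerivAt_id y)).sub_const (k : ℝ)
  rw [show bm (k + 1) = _ from funext (bm_succ k)]
  refine h.congr_deriv ?_
  rw [Dm_eq_Dm_succ_add k y, Nat.add_sub_cancel]
  push_cast
  field_simp
  ring

theorem strictMonoOn_bm_succ (k : ℕ) : StrictMonoOn (bm (k + 1)) (Ioi 0) := by
  refine strictMonoOn_of_hasDerivWithinAt_pos (convex_Ioi 0)
    (fun y hy ↦ (hasDerivAt_bm_succ k hy).continuousAt.continuousWithinAt)
    (fun y hy ↦ (hasDerivAt_bm_succ k (interior_subset hy)).hasDerivWithinAt) fun y hy ↦ ?_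
  rw [interior_Ioi] at hy
  have hD := Dm_pos (k + 1) hy
  exact div_pos (sub_pos.2 (pow_mul_Dm_sub_lt_factorial_mul_Dm_sq k hy)) (by positivity)

theorem tendsto_Dm_div_pow (m : ℕ) :
    Tendsto (fun y ↦ Dm m y / y ^ m) (𝓝[≠] 0) (𝓝 (1 / m !)) := by
  have hseries : ∀ y : ℝ, y ≠ 0 → Dm m y / y ^ m = ∑' n, y ^ n / (n + m)! := fun y hy ↦
    ((hasSum_Dm m y).div_const (y ^ m)).congr_fun (fun n ↦ by field_simp; ring) |>.tsum_eq.symm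
  have hcont : ContinuousAt (fun y : ℝ ↦ ∑' n, y ^ n / (n + m)!) 0 := by
    refine (continuousOn_tsum (u := fun n ↦ 1 / (n + m)!) (s := Icc (-1) 1)
      (fun n ↦ by fun_prop) (by simpa using (hasSum_Dm m 1).summable)
      fun n y hy ↦ ?_).continuousAt (Icc_mem_nhds (by norm_num) (by norm_num))
    rw [norm_div, norm_pow, Real.norm_natCast]
    gcongr
    exact pow_le_one₀ (norm_nonneg y) (abs_le.2 hy)
  have hzero : ∑' n, (0 : ℝ) ^ n / (n + m)! = 1 / m ! := by
    rw [tsum_eq_single 0 (fun n hn ↦ by simp [hn])]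
    simp
  rw [← hzero]
  exact (hcont.tendsto.mono_left nhdsWithin_le_nhds).congr'
    (eventually_nhdsWithin_of_forall fun y hy ↦ (hseries y hy).symm)

theorem tendsto_bm_succ (k : ℕ) : Tendsto (bm (k + 1)) (𝓝[>] 0) (𝓝 1) := by
  have hDm := (tendsto_Dm_div_pow (k + 1)).mono_left (nhdsGT_le_nhdsNE 0)
  have h := ((hDm.const_mul (k ! : ℝ)).inv₀ (by positivity)).add
    (tendsto_id.mono_left nhdsWithin_le_nhds) |>.sub_const (k : ℝ)
  have hlim : (k ! * (1 / (k + 1)! : ℝ))⁻¹ + 0 - k = 1 := by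
    rw [Nat.factorial_succ]
    push_cast
    field_simp
    ring
  rw [hlim] at h
  refine h.congr fun y ↦ ?_
  rw [bm_succ, ← mul_div_assoc, inv_div]
  rfl

theorem StrictMonoOn.lt_of_tendsto_nhdsGT {α β : Type*} [LinearOrder α] [TopologicalSpace α]
    [OrderTopology α] [DenselyOrdered α] [LinearOrder β] [TopologicalSpace β]
    [OrderClosedTopology β] {f : α → β} {a y : α} {l : β} (hf : StrictMonoOn f (Ioi a))
    (hl : Tendsto f (𝓝[>] a) (𝓝 l)) (hy : a < y) : l < f y := by
  obtain ⟨z, haz, hzy⟩ := exists_between hy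
  have : (𝓝[>] a).NeBot := nhdsGT_neBot_of_exists_gt ⟨y, hy⟩
  have hlz : l ≤ f z := le_of_tendsto hl <| by
    filter_upwards [Ioo_mem_nhdsGT haz] with t ht
    exact (hf ht.1 haz ht.2).le
  exact hlz.trans_lt (hf haz hy hzy)

/-- for `m ≥ 1`, `bm` is strictly increasing on `(0,∞)`,
tends to `1` at `0+`, and is `> 1` on `(0,∞)`. -/
theorem bm_strictMono_gt_one (m : ℕ) (hm : 1 ≤ m) :
    StrictMonoOn (bm m) (Set.Ioi (0:ℝ)) ∧
    Tendsto (bm m) (nhdsWithin 0 (Set.Ioi (0:ℝ))) (nhds 1) ∧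
    (∀ y : ℝ, 0 < y → 1 < bm m y) := by
  obtain ⟨k, rfl⟩ := Nat.exists_eq_add_of_le' hm
  exact ⟨strictMonoOn_bm_succ k, tendsto_bm_succ k,
    fun y ↦ (strictMonoOn_bm_succ k).lt_of_tendsto_nhdsGT (tendsto_bm_succ k)⟩
end
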